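/- arXiv:1708.09328 — 3 statements merged into one kernel-verified Lean document; each statement's English description precedes it below -/
import Mathlib

section
/- For every integer d ≥ 1 and all real numbers p, q, s with 0 ≤ p ≤ q and s ≥ 0, one has Σ_{j=1}^d Σ_{r=1}^j C(d,j) C(j,r) (r/j) p^r (q−p)^{j−r} s^{d−j} = p · Σ_{j=1}^d C(d,j) q^{j−1} s^{d−j}; in particular, if q > 0 this common value equals p · ((q+s)^d − s^d)/q. Consequently, under power-of-d routing in a system whose empirical state measure is ν on N servers, the probability that an arriving job is routed to a server in state (n,z_1,…,z_n) equals (ν({(n,z_1,…,z_n)})/N) · (R_n^d − R_{n+1}^d)/(R_n − R_{n+1}), where R_n is the fraction of servers with at least n jobs in service. -/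
/-! Call a sampled tuple admissible when every sampled server has occupancy at least `n`, and
let `S` be the set of sample slots holding a server of occupancy exactly `n`. Among admissible
tuples with a given `S`, the destination is uniform on `S`, and for each slot of `S` the fraction
of tuples whose server there is in the tagged state is `#Z / #E`, where `Z` and `E` are the sets of
servers in the tagged state and of occupancy `n`. So the tuples with a given `S ≠ ∅` contribute
`#Z/#E · #E^#S · #B^(d - #S)` (with `B` the servers of occupancy `> n`), and summing over all
`S ≠ ∅` gives `#Z/#E · ((#E + #B)^d - #B^d)` by the binomial theorem. The two algebraic
identities are the binomial theorem combined with `r · C(j, r) = j · C(j - 1, r - 1)`. -/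

open scoped NNReal Classical

noncomputable section

/-- The server-state space: an occupancy `n : ℕ` together with the ages of the `n` jobs. -/
abbrev SState : Type := Σ n : ℕ, (Fin n → ℝ≥0)

/-- The probability that an arriving job is routed to a server in the tagged state `z`
under power-of-`d` routing, given the configuration `servers : Fin N → SState`:
`d` servers are sampled independently and uniformly at random, and the job is sent to a
sampled server of minimum occupancy, ties among minimal-occupancy sampled slots being
broken uniformly at random.  (A sampled slot can be the destination only if every sampled
slot has occupancy `≥ z.1`; the destination is then uniform among the sampled slots of
minimal occupancy, i.e. occupancy `z.1` if any slot attains it.) -/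
def routingProb (N d : ℕ) (servers : Fin N → SState) (z : SState) : ℝ :=
  (∑ f : Fin d → Fin N,
      if ∀ i, z.1 ≤ (servers (f i)).1 then
        (((Finset.univ.filter fun i : Fin d => servers (f i) = z).card : ℝ) /
          ((Finset.univ.filter fun i : Fin d => (servers (f i)).1 = z.1).card : ℝ))
      else 0) / (N : ℝ) ^ d

/-- The fraction of servers with at least `m` jobs in service. -/
def Rfrac (N : ℕ) (servers : Fin N → SState) (m : ℕ) : ℝ :=
  ((Finset.univ.filter fun i : Fin N => m ≤ (servers i).1).card : ℝ) / (N : ℝ)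

open Finset

theorem mul_sum_Icc_choose_mul_pow_pred_mul_pow {R : Type*} [CommRing R] (d : ℕ) (q s : R) :
    q * ∑ j ∈ Icc 1 d, (d.choose j : R) * q ^ (j - 1) * s ^ (d - j) = (q + s) ^ d - s ^ d := by
  have hrange : range (d + 1) = insert 0 (Icc 1 d) := by ext; simp; omega
  rw [add_pow, hrange, sum_insert (by simp), mul_sum]
  simp only [pow_zero, one_mul, Nat.sub_zero, Nat.choose_zero_right, Nat.cast_one, mul_one,
    add_sub_cancel_left]
  refine sum_congr rfl fun j hj => ?_
  obtain ⟨i, rfl⟩ : ∃ i, j = i + 1 := ⟨j - 1, by grind⟩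
  simp only [Nat.add_sub_cancel, pow_succ]
  ring

theorem sum_Icc_choose_mul_div_mul_pow_mul_pow {K : Type*} [Field K] [CharZero K] {j : ℕ}
    (hj : j ≠ 0) (x y : K) :
    ∑ r ∈ Icc 1 j, (j.choose r : K) * ((r : K) / (j : K)) * x ^ r * y ^ (j - r)
      = x * (x + y) ^ (j - 1) := by
  obtain ⟨m, rfl⟩ : ∃ m, j = m + 1 := ⟨j - 1, by omega⟩
  rw [← Ico_add_one_right_eq_Icc, ← sum_Ico_add' _ 0 (m + 1) 1, ← range_eq_Ico, Nat.add_sub_cancel,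
    add_pow, mul_sum]
  refine sum_congr rfl fun r _ => ?_
  have hchoose : ((m + 1).choose (r + 1) : K) * ((r + 1 : ℕ) : K) = (m + 1 : ℕ) * m.choose r := by
    exact_mod_cast (Nat.add_one_mul_choose_eq m r).symm
  rw [show m + 1 - (r + 1) = m - r by omega, mul_div_assoc', hchoose]
  field_simp
  ring

theorem Fintype.card_filter_piFinset_mem_mul_card {ι : Type*} [DecidableEq ι] [Fintype ι]
    {δ : ι → Type*} [∀ i, DecidableEq (δ i)] (s : ∀ i, Finset (δ i)) (i : ι) {t : Finset (δ i)}
    (hts : t ⊆ s i) :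
    #{f ∈ Fintype.piFinset s | f i ∈ t} * #(s i) = #t * ∏ j, #(s j) := by
  rw [← Fintype.piFinset_update_eq_filter_piFinset_mem _ _ hts, Fintype.card_piFinset,
    ← mul_prod_erase _ _ (mem_univ i), ← mul_prod_erase _ (fun j => #(s j)) (mem_univ i),
    Finset.prod_congr rfl fun j hj => by rw [Function.update_of_ne (ne_of_mem_erase hj)],
    Function.update_self]
  ring

theorem Fintype.sum_piFinset_card_filter_mem {ι : Type*} [DecidableEq ι] [Fintype ι]
    {δ : ι → Type*} [∀ i, DecidableEq (δ i)] (s t : ∀ i, Finset (δ i)) :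
    ∑ f ∈ Fintype.piFinset s, #{i | f i ∈ t i} = ∑ i, #{f ∈ Fintype.piFinset s | f i ∈ t i} := by
  simp only [card_filter]
  exact sum_comm

section Sampling

variable {ι α : Type*} [DecidableEq ι] [Fintype ι]

theorem prod_card_ite_mem (S : Finset ι) (E B : Finset α) :
    ∏ i, #(if i ∈ S then E else B) = #E ^ #S * #B ^ (Fintype.card ι - #S) := by
  rw [prod_apply_ite, prod_const, prod_const, filter_mem_eq_inter, univ_inter, ← card_compl]
  simp [filter_not, compl_eq_univ_sdiff]

variable [DecidableEq α] {Z E B : Finset α}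

theorem filter_piFinset_union_eq_piFinset_ite (hEB : Disjoint E B) (S : Finset ι) :
    {f ∈ Fintype.piFinset fun _ : ι => E ∪ B | ({i | f i ∈ E} : Finset ι) = S}
      = Fintype.piFinset fun i => if i ∈ S then E else B := by
  ext f
  simp only [mem_filter, Fintype.mem_piFinset, mem_union, Finset.ext_iff, mem_univ, true_and]
  constructor
  · rintro ⟨hEB', hS⟩ i
    split_ifs with hi
    · exact (hS i).mpr hi
    · exact (hEB' i).resolve_left fun h => hi ((hS i).mp h)
  · intro h
    refine ⟨fun i => ?_, fun i => ⟨fun hE => ?_, fun hi => by simpa [hi] using h i⟩⟩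
    · have := h i
      split_ifs at this <;> simp [this]
    · by_contra hi
      have := h i
      rw [if_neg hi] at this
      exact disjoint_left.mp hEB hE this

theorem card_mul_sum_piFinset_ite_card_filter_mem (hZE : Z ⊆ E) (hEB : Disjoint E B)
    (S : Finset ι) :
    #E * ∑ f ∈ Fintype.piFinset (fun i => if i ∈ S then E else B), #{i | f i ∈ Z}
      = #S * #Z * (#E ^ #S * #B ^ (Fintype.card ι - #S)) := by
  rw [Fintype.sum_piFinset_card_filter_mem _ fun _ => Z, mul_sum]
  have hterm : ∀ i, #E * #{f ∈ Fintype.piFinset (fun i => if i ∈ S then E else B) | f i ∈ Z}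
      = if i ∈ S then #Z * (#E ^ #S * #B ^ (Fintype.card ι - #S)) else 0 := by
    intro i
    split_ifs with hi
    · have := Fintype.card_filter_piFinset_mem_mul_card (fun i => if i ∈ S then E else B) i
        (t := Z) (by simpa [hi] using hZE)
      rw [if_pos hi, prod_card_ite_mem] at this
      rw [mul_comm, this]
    · rw [filter_false_of_mem fun f hf hZ => ?_, Finset.card_empty, mul_zero]
      have := Fintype.mem_piFinset.mp hf i
      rw [if_neg hi] at this
      exact disjoint_left.mp hEB (hZE hZ) this
  rw [sum_congr rfl fun i _ => hterm i, Fintype.sum_ite_mem, sum_const, smul_eq_mul, mul_assoc]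

theorem sum_piFinset_union_card_filter_mem_div {K : Type*} [Field K] [CharZero K]
    (hZE : Z ⊆ E) (hEB : Disjoint E B) :
    ∑ f ∈ Fintype.piFinset (fun _ : ι => E ∪ B), (#{i | f i ∈ Z} : K) / #{i | f i ∈ E}
      = #Z * (((#E : K) + #B) ^ Fintype.card ι - (#B : K) ^ Fintype.card ι) / #E := by
  by_cases he : #E = 0
  · obtain rfl : Z = ∅ := subset_empty.mp (card_eq_zero.mp he ▸ hZE)
    simp
  have hfiber : ∀ S : Finset ι,
      (∑ f ∈ Fintype.piFinset (fun _ : ι => E ∪ B) with ({i | f i ∈ E} : Finset ι) = S,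
          (#{i | f i ∈ Z} : K) / #{i | f i ∈ E}) * #E
        = #S * (#Z * (#E ^ #S * #B ^ (Fintype.card ι - #S))) / #S := by
    intro S
    rw [sum_congr rfl fun f hf => by rw [(mem_filter.mp hf).2],
      filter_piFinset_union_eq_piFinset_ite hEB, ← sum_div, div_mul_eq_mul_div, mul_comm,
      ← Nat.cast_sum, ← Nat.cast_mul, card_mul_sum_piFinset_ite_card_filter_mem hZE hEB S]
    push_cast
    ring
  rw [eq_div_iff (by exact_mod_cast he), ← sum_fiberwise _ fun f => ({i | f i ∈ E} : Finset ι),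
    sum_mul, Fintype.sum_congr _ _ hfiber, ← Fintype.sum_pow_mul_eq_add_pow, mul_sub, mul_sum,
    Fintype.sum_eq_add_sum_compl ∅, Fintype.sum_eq_add_sum_compl (∅ : Finset ι)]
  simp only [Finset.card_empty, CharP.cast_eq_zero, zero_mul, zero_div, zero_add, pow_zero,
    one_mul, Nat.sub_zero, add_sub_cancel_left]
  refine sum_congr rfl fun S hS => mul_div_cancel_left₀ _ ?_
  simpa using hS

end Sampling

theorem Finset.filter_eq_union_filter_succ_le {α : Type*} [DecidableEq α] (s : Finset α)
    (g : α → ℕ) (m : ℕ) : {a ∈ s | g a = m} ∪ {a ∈ s | m + 1 ≤ g a} = {a ∈ s | m ≤ g a} := by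
  ext a
  simp only [mem_union, mem_filter, ← and_or_left]
  exact and_congr_right fun _ => by omega

theorem Rfrac_sub_Rfrac_succ (N : ℕ) (servers : Fin N → SState) (m : ℕ) :
    Rfrac N servers m - Rfrac N servers (m + 1) = #{k | (servers k).1 = m} / N := by
  rw [Rfrac, Rfrac, ← sub_div, ← filter_eq_union_filter_succ_le,
    card_union_of_disjoint (disjoint_filter.mpr fun _ _ h => by omega), Nat.cast_add,
    add_sub_cancel_right]

theorem routingProb_eq {N : ℕ} (hN : N ≠ 0) (d : ℕ) (servers : Fin N → SState) (z : SState) :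
    routingProb N d servers z
      = #{k | servers k = z} / N * (Rfrac N servers z.1 ^ d - Rfrac N servers (z.1 + 1) ^ d) /
          (#{k | (servers k).1 = z.1} / N) := by
  set Z : Finset (Fin N) := {k | servers k = z}
  set E : Finset (Fin N) := {k | (servers k).1 = z.1}
  set B : Finset (Fin N) := {k | z.1 + 1 ≤ (servers k).1}
  have hZE : Z ⊆ E := fun k hk => by simp_all [Z, E]
  have hEB : Disjoint E B := disjoint_filter.mpr fun k _ h => by omega
  have hunion : E ∪ B = ({k | z.1 ≤ (servers k).1} : Finset (Fin N)) :=
    filter_eq_union_filter_succ_le _ _ _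
  have hsum : (∑ f : Fin d → Fin N, if ∀ i, z.1 ≤ (servers (f i)).1 then
        ((#{i | servers (f i) = z} : ℕ) : ℝ) / (#{i | (servers (f i)).1 = z.1} : ℕ) else 0)
      = ∑ f ∈ Fintype.piFinset (fun _ : Fin d => E ∪ B),
        (#{i | f i ∈ Z} : ℝ) / #{i | f i ∈ E} := by
    rw [← sum_filter]
    refine sum_congr ?_ fun f _ => by simp [Z, E]
    ext f
    simp [hunion]
  rw [routingProb, hsum, sum_piFinset_union_card_filter_mem_div hZE hEB, Fintype.card_fin,
    Rfrac, Rfrac, ← hunion, card_union_of_disjoint hEB, Nat.cast_add,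
    div_pow, div_pow, ← sub_div, div_mul_eq_mul_div, div_div_div_cancel_right₀ (by positivity)]
  ring

/-- **The power-of-`d` routing probability.**
(1) For every `d ≥ 1` and `0 ≤ p ≤ q`, `s ≥ 0`,
`Σ_{j=1}^d Σ_{r=1}^j C(d,j) C(j,r) (r/j) p^r (q−p)^{j−r} s^{d−j}
  = p Σ_{j=1}^d C(d,j) q^{j−1} s^{d−j}`;
(2) if moreover `q > 0` this common value equals `p ((q+s)^d − s^d)/q`;
(3) consequently, under power-of-`d` routing in a system of `N` servers whose empirical
state is the configuration `servers`, the probability that an arriving job is routed to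
a server in state `z = (n, z₁, …, z_n)` equals
`(#{i : servers i = z}/N) · (R_n^d − R_{n+1}^d)/(R_n − R_{n+1})`,
where `R_m` is the fraction of servers with at least `m` jobs in service. -/
theorem power_of_d_routing_probability :
    (∀ d : ℕ, 1 ≤ d → ∀ p q s : ℝ, 0 ≤ p → p ≤ q → 0 ≤ s →
      (∑ j ∈ Finset.Icc 1 d, ∑ r ∈ Finset.Icc 1 j,
          (d.choose j : ℝ) * (j.choose r : ℝ) * ((r : ℝ) / (j : ℝ)) *
            p ^ r * (q - p) ^ (j - r) * s ^ (d - j))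
        = p * ∑ j ∈ Finset.Icc 1 d, (d.choose j : ℝ) * q ^ (j - 1) * s ^ (d - j)) ∧
    (∀ d : ℕ, 1 ≤ d → ∀ p q s : ℝ, 0 ≤ p → p ≤ q → 0 ≤ s → 0 < q →
      p * (∑ j ∈ Finset.Icc 1 d, (d.choose j : ℝ) * q ^ (j - 1) * s ^ (d - j))
        = p * ((q + s) ^ d - s ^ d) / q) ∧
    (∀ (N d : ℕ), 1 ≤ N → 1 ≤ d → ∀ (servers : Fin N → SState) (z : SState) (n : ℕ),
      z.1 = n →
      routingProb N d servers z
        = (((Finset.univ.filter fun i : Fin N => servers i = z).card : ℝ) / (N : ℝ)) *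
            ((Rfrac N servers n) ^ d - (Rfrac N servers (n + 1)) ^ d) /
            ((Rfrac N servers n) - (Rfrac N servers (n + 1)))) := by
  refine ⟨fun d _ p q s _ _ _ => ?_, fun d _ p q s _ _ _ hq => ?_, ?_⟩
  · rw [mul_sum]
    refine sum_congr rfl fun j hj => ?_
    have hinner := sum_Icc_choose_mul_div_mul_pow_mul_pow (j := j) (by grind) p (q - p)
    rw [add_sub_cancel] at hinner
    calc _ = (d.choose j : ℝ) * s ^ (d - j) * ∑ r ∈ Icc 1 j,
            (j.choose r : ℝ) * ((r : ℝ) / (j : ℝ)) * p ^ r * (q - p) ^ (j - r) := by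
          rw [mul_sum]
          exact sum_congr rfl fun _ _ => by ring
      _ = _ := by rw [hinner]; ring
  · rw [mul_div_assoc, ← mul_sum_Icc_choose_mul_pow_pred_mul_pow, mul_div_cancel_left₀ _ hq.ne']
  · rintro N d hN - servers z n rfl
    rw [routingProb_eq (by omega), Rfrac_sub_Rfrac_succ]

end
end

section
/- If (ν_t^1)_{t≥0} and (ν_t^2)_{t≥0} are two weakly continuous maps into M_1(𝒰) each satisfying the mild-form mean-field equation, then for every t ≥ 0: ‖ν_t^1 − ν_t^2‖ ≤ ‖ν_0^1 − ν_0^2‖ + (2C‖β‖_∞ + 8d²λ) ∫_0^t ‖ν_s^1 − ν_s^2‖ ds. -/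
open MeasureTheory Filter Set
open scoped NNReal

noncomputable section

namespace MFModel

/-- The set `𝒰_n` of states with occupancy exactly `n`. -/
def level (n : ℕ) : Set SState := {u | u.1 = n}

/-- The empty state `0 ∈ 𝒰_0`. -/
def emptyState : SState := ⟨0, fun i => i.elim0⟩

/-- The state `(1,0)`: a single job of age `0`. -/
def oneZero : SState := ⟨1, fun _ => 0⟩

/-- `ν` is a probability measure concentrated on `𝒰 = ⋃_{n ≤ C} 𝒰_n`. -/
def MemM1 (C : ℕ) (ν : Measure SState) : Prop :=
  IsProbabilityMeasure ν ∧ ν {u : SState | u.1 ≤ C} = 1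

/-- `R̄_n(ν) = Σ_{m=n}^C ν(𝒰_m)` (so that `R̄_{C+1}(ν) = 0`). -/
def Rbar (C : ℕ) (ν : Measure SState) (n : ℕ) : ℝ :=
  ∑ m ∈ Finset.Icc n C, (ν (level m)).toReal

/-- `Φ_n(ν) = Σ_{k=0}^{d-1} R̄_n(ν)^k R̄_{n+1}(ν)^{d-1-k}`, the divided power difference
`(R̄_n^d − R̄_{n+1}^d)/(R̄_n − R̄_{n+1})`. -/
def Phi (C d : ℕ) (ν : Measure SState) (n : ℕ) : ℝ :=
  ∑ k ∈ Finset.range d, (Rbar C ν n) ^ k * (Rbar C ν (n + 1)) ^ (d - 1 - k)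

/-- The restriction of `ν` to the level `𝒰_n`, viewed as a measure on the ages. -/
def fiber (ν : Measure SState) (n : ℕ) : Measure (Fin n → ℝ≥0) :=
  Measure.comap (fun x : Fin n → ℝ≥0 => (⟨n, x⟩ : SState)) ν

/-- The restriction of `ν` to the level `𝒰_n`, as a measure on `[0,∞)^n ⊆ ℝ^n`. -/
def fiberReal (ν : Measure SState) (n : ℕ) : Measure (Fin n → ℝ) :=
  Measure.map (fun (x : Fin n → ℝ≥0) (i : Fin n) => (x i : ℝ)) (fiber ν n)

/-- The pairing `⟨ν, φ⟩ = ∫_𝒰 φ dν`. -/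
def pair (ν : Measure SState) (φ : SState → ℝ) : ℝ := ∫ u, φ u ∂ν

/-- The age shift `τ_y^+` on states (`y` a real number, truncated at `0`). -/
def shift (y : ℝ) (u : SState) : SState := ⟨u.1, fun i => u.2 i + Real.toNNReal y⟩

/-- `φ ∈ C_b(𝒰)`: bounded continuous. -/
def IsCb (φ : SState → ℝ) : Prop := Continuous φ ∧ ∃ M, ∀ u, |φ u| ≤ M

/-- `φ ∈ C_b^1(𝒰)` with partial-derivative family `D`: `φ` is bounded continuous, and on
each level the partial derivatives (one-sided at the boundary of `[0,∞)`) exist, are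
continuous and are bounded; `D n i x` is `∂φ(n,x)/∂x_i`. -/
def IsCb1 (φ : SState → ℝ) (D : (n : ℕ) → Fin n → (Fin n → ℝ≥0) → ℝ) : Prop :=
  IsCb φ ∧
  (∀ n (i : Fin n), Continuous (D n i)) ∧
  (∃ M, ∀ n (i : Fin n) x, |D n i x| ≤ M) ∧
  (∀ n (i : Fin n) (x : Fin n → ℝ≥0),
    HasDerivWithinAt (fun y : ℝ => φ ⟨n, Function.update x i (Real.toNNReal y)⟩)
      (D n i x) (Set.Ici (0 : ℝ)) ((x i : ℝ)))

/-- `φ' = Σ_i ∂φ/∂x_i`, built from the partial-derivative family `D`. -/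
def sumDeriv (D : (n : ℕ) → Fin n → (Fin n → ℝ≥0) → ℝ) (u : SState) : ℝ :=
  ∑ i : Fin u.1, D u.1 i u.2

/-- The drift functional `B[φ](ν)` of the mean-field model. -/
def drift (C d : ℕ) (lam : ℝ) (β : ℝ≥0 → ℝ) (φ : SState → ℝ) (ν : Measure SState) : ℝ :=
  (∑ n ∈ Finset.range C, ∑ j : Fin (n + 1),
    ∫ x : Fin (n + 1) → ℝ≥0,
      β (x j) * (φ ⟨n, x ∘ j.succAbove⟩ - φ ⟨n + 1, x⟩) ∂(fiber ν (n + 1)))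
  + lam * ((ν (level 0)).toReal * Phi C d ν 0 * (φ oneZero - φ emptyState)
      + ∑ n ∈ Finset.Icc 1 (C - 1), (Phi C d ν n / (n + 1)) *
          ∑ j : Fin (n + 1),
            ∫ x : Fin n → ℝ≥0, (φ ⟨n + 1, j.insertNth 0 x⟩ - φ ⟨n, x⟩) ∂(fiber ν n))

/-- Weak continuity of a path of measures on `[0,∞)`. -/
def WeaklyContinuous (ν : ℝ → Measure SState) : Prop :=
  ∀ f : BoundedContinuousFunction SState ℝ,
    ContinuousOn (fun t => ∫ u, f u ∂(ν t)) (Set.Ici (0 : ℝ))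

/-- The weak-form mean-field equation for the test function `φ` with derivative family `D`. -/
def WeakEq (C d : ℕ) (lam : ℝ) (β : ℝ≥0 → ℝ) (ν : ℝ → Measure SState)
    (φ : SState → ℝ) (D : (n : ℕ) → Fin n → (Fin n → ℝ≥0) → ℝ) : Prop :=
  ∀ t ≥ (0 : ℝ),
    pair (ν t) φ = pair (ν 0) φ + (∫ s in (0 : ℝ)..t, pair (ν s) (sumDeriv D))
      + ∫ s in (0 : ℝ)..t, drift C d lam β φ (ν s)

/-- The mild-form mean-field equation for the test function `φ`. -/
def MildEq (C d : ℕ) (lam : ℝ) (β : ℝ≥0 → ℝ) (ν : ℝ → Measure SState)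
    (φ : SState → ℝ) : Prop :=
  ∀ t ≥ (0 : ℝ),
    pair (ν t) φ = pair (ν 0) (fun u => φ (shift t u))
      + ∫ s in (0 : ℝ)..t, drift C d lam β (fun u => φ (shift (t - s) u)) (ν s)

/-- A mean-field model solution: a weakly continuous path of probability measures on `𝒰`
solving the weak-form equation for every `C_b^1` test function. -/
def IsMFSolution (C d : ℕ) (lam : ℝ) (β : ℝ≥0 → ℝ) (ν : ℝ → Measure SState) : Prop :=
  (∀ t ≥ (0 : ℝ), MemM1 C (ν t)) ∧ WeaklyContinuous ν ∧
  ∀ (φ : SState → ℝ) (D : (n : ℕ) → Fin n → (Fin n → ℝ≥0) → ℝ),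
    IsCb1 φ D → WeakEq C d lam β ν φ D

/-- A mild solution: weakly continuous path of probability measures on `𝒰` solving
the mild-form equation for every `C_b` test function. -/
def IsMildSolution (C d : ℕ) (lam : ℝ) (β : ℝ≥0 → ℝ) (ν : ℝ → Measure SState) : Prop :=
  (∀ t ≥ (0 : ℝ), MemM1 C (ν t)) ∧ WeaklyContinuous ν ∧
  ∀ φ : SState → ℝ, IsCb φ → MildEq C d lam β ν φ

/-- The total-variation style norm `‖ν¹ − ν²‖ = sup_{‖φ‖_∞ ≤ 1, φ ∈ C_b} |⟨ν¹,φ⟩ − ⟨ν²,φ⟩|`. -/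
def measDist (μ₁ μ₂ : Measure SState) : ℝ :=
  ⨆ φ : {φ : BoundedContinuousFunction SState ℝ // ‖φ‖ ≤ 1},
    |(∫ u, φ.1 u ∂μ₁) - ∫ u, φ.1 u ∂μ₂|

end MFModel
end

/-!
For a test function with `‖φ‖ ≤ 1`, subtracting the mild equations of the two solutions leaves
`⟨ν¹₀ - ν²₀, τ_t φ⟩ ≤ ‖ν¹₀ - ν²₀‖` plus the time integral of
`B[τ_{t-s} φ](ν¹_s) - B[τ_{t-s} φ](ν²_s)`, so everything rests on a Lipschitz bound for
`ν ↦ B[ψ](ν)`. Now `B[ψ](ν) = ∫ (D_ψ + λ A_ψ^{a(ν)}) dν`, where the death part `D_ψ` has sup norm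
at most `2 C ‖β‖ ‖ψ‖` and the arrival part `A_ψ^a` is linear in its level coefficients
`a(ν)_n = Φ_n(ν) / (n + 1)`, which are polynomials in the masses `R̄_n(ν)` of clopen sets.
Splitting `B[ψ](ν¹) - B[ψ](ν²)` into a change of measure at fixed coefficients and a change of
coefficients gives the constant `(2 C ‖β‖ + (2 d + 2 d²) λ) ‖ψ‖`. Weak continuity of the paths
makes the integrands measurable in `s`: `s ↦ ‖ν¹_s - ν²_s‖` is lower semicontinuous, and the
drift is continuous separately in the path and in the shift.
-/

open scoped BoundedContinuousFunction

section SigmaMeasurable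

variable {ι : Type*} {X : ι → Type*} [∀ i, MeasurableSpace (X i)]

theorem measurableSet_sigma_iff {s : Set (Σ i, X i)} :
    MeasurableSet s ↔ ∀ i, MeasurableSet (Sigma.mk i ⁻¹' s) :=
  MeasurableSpace.measurableSet_iInf

theorem measurableEmbedding_sigmaMk (i : ι) :
    MeasurableEmbedding (Sigma.mk i : X i → Σ i, X i) where
  injective := sigma_mk_injective
  measurable _ hs := measurableSet_sigma_iff.1 hs i
  measurableSet_image' s hs := measurableSet_sigma_iff.2 fun j => by
    rcases eq_or_ne j i with rfl | hne
    · rwa [Set.preimage_image_eq _ sigma_mk_injective]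
    · rw [Set.preimage_image_sigmaMk_of_ne hne]
      exact .empty

instance [∀ i, TopologicalSpace (X i)] [∀ i, OpensMeasurableSpace (X i)] :
    OpensMeasurableSpace (Σ i, X i) :=
  ⟨MeasurableSpace.generateFrom_le fun _ hs =>
    measurableSet_sigma_iff.2 fun i => (isOpen_sigma_iff.1 hs i).measurableSet⟩

end SigmaMeasurable

section SigmaExtend

@[fun_prop]
theorem Continuous.sigmaMk {ι Y : Type*} {X : ι → Type*} [∀ i, TopologicalSpace (X i)]
    [TopologicalSpace Y] {i : ι} {f : Y → X i} (hf : Continuous f) :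
    Continuous fun y => (⟨i, f y⟩ : Σ i, X i) :=
  continuous_sigmaMk.comp hf

variable {ι : Type*} {X : ι → Type*} {i : ι} {h : X i → ℝ} {u : Σ i, X i}

theorem extend_sigmaMk_of_fst_ne (hu : u.1 ≠ i) : Function.extend (Sigma.mk i) h 0 u = 0 :=
  Function.extend_apply' _ _ _ fun ⟨_, hx⟩ => hu (hx ▸ rfl)

theorem abs_extend_sigmaMk_le {M : ℝ} (hM : 0 ≤ M) (hh : ∀ x, |h x| ≤ M) :
    |Function.extend (Sigma.mk i) h 0 u| ≤ M := by
  by_cases hu : ∃ x, Sigma.mk i x = u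
  · obtain ⟨x, rfl⟩ := hu
    rw [sigma_mk_injective.extend_apply]
    exact hh x
  · rw [Function.extend_apply' _ _ _ hu, Pi.zero_apply, abs_zero]
    exact hM

theorem continuous_extend_sigmaMk [∀ i, TopologicalSpace (X i)] (hh : Continuous h) :
    Continuous (Function.extend (Sigma.mk i) h 0) := by
  refine continuous_sigma fun j => ?_
  rcases eq_or_ne j i with rfl | hne
  · simpa only [sigma_mk_injective.extend_apply] using hh
  · have hzero : (fun x : X j => Function.extend (Sigma.mk i) h 0 ⟨j, x⟩) = 0 :=
      funext fun _ => extend_sigmaMk_of_fst_ne hne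
    rw [hzero]
    exact continuous_const

theorem continuous_extend_sigmaMk_apply {Y : Type*} [TopologicalSpace Y] {h : Y → X i → ℝ}
    (hh : ∀ x, Continuous fun y => h y x) :
    Continuous fun y => Function.extend (Sigma.mk i) (h y) 0 u := by
  by_cases hu : ∃ x, Sigma.mk i x = u
  · obtain ⟨x, rfl⟩ := hu
    simpa only [sigma_mk_injective.extend_apply] using hh x
  · simpa only [Function.extend_apply' _ _ _ hu] using continuous_const

theorem integral_extend_sigmaMk [∀ i, MeasurableSpace (X i)] (μ : Measure (Σ i, X i)) :
    ∫ u, Function.extend (Sigma.mk i) h 0 u ∂μ = ∫ x, h x ∂(μ.comap (Sigma.mk i)) := by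
  have he := measurableEmbedding_sigmaMk (X := X) i
  calc ∫ u, Function.extend (Sigma.mk i) h 0 u ∂μ
      = ∫ u in Set.range (Sigma.mk i), Function.extend (Sigma.mk i) h 0 u ∂μ :=
        (setIntegral_eq_integral_of_forall_compl_eq_zero (s := Set.range (Sigma.mk i))
          fun u hu => Function.extend_apply' h (0 : (Σ i, X i) → ℝ) u hu).symm
    _ = ∫ x, h x ∂(μ.comap (Sigma.mk i)) := by
        rw [← he.map_comap, he.integral_map]
        simp only [sigma_mk_injective.extend_apply]

/-- At each point at most one summand is nonzero, since the levels `lvl k` are distinct. -/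
theorem abs_sum_extend_sigmaMk_le {κ : Type*} {s : Finset κ} {lvl : κ → ι}
    (hlvl : Function.Injective lvl) {h : ∀ k, X (lvl k) → ℝ} {M : ℝ} (hM : 0 ≤ M)
    (hh : ∀ k ∈ s, ∀ x, |h k x| ≤ M) :
    |∑ k ∈ s, Function.extend (Sigma.mk (lvl k)) (h k) 0 u| ≤ M := by
  by_cases hu : ∃ k ∈ s, lvl k = u.1
  · obtain ⟨k, hk, hku⟩ := hu
    rw [Finset.sum_eq_single_of_mem k hk fun k' _ hne =>
      extend_sigmaMk_of_fst_ne (u := u) fun h' => hne (hlvl (h'.symm.trans hku.symm) ▸ rfl)]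
    exact abs_extend_sigmaMk_le hM (hh k hk)
  · rw [Finset.sum_eq_zero fun k hk =>
      extend_sigmaMk_of_fst_ne (u := u) fun h' => hu ⟨k, hk, h'.symm⟩,
      abs_zero]
    exact hM

end SigmaExtend

theorem integrable_of_continuous_of_abs_le {X : Type*} [TopologicalSpace X] [MeasurableSpace X]
    [OpensMeasurableSpace X] {μ : Measure X} [IsFiniteMeasure μ] {f : X → ℝ} (hf : Continuous f)
    {M : ℝ} (hM : ∀ x, |f x| ≤ M) : Integrable f μ :=
  .of_bound hf.aestronglyMeasurable M (ae_of_all _ fun x => (Real.norm_eq_abs _).trans_le (hM x))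

theorem abs_integral_le_of_abs_le {X : Type*} [MeasurableSpace X] {μ : Measure X}
    [IsProbabilityMeasure μ] {f : X → ℝ} {M : ℝ} (hM : ∀ x, |f x| ≤ M) : |∫ x, f x ∂μ| ≤ M := by
  simpa using norm_integral_le_of_norm_le_const (μ := μ)
    (ae_of_all _ fun x => (Real.norm_eq_abs _).trans_le (hM x))

theorem abs_indicator_one_le_one {α : Type*} (A : Set α) (a : α) :
    |A.indicator (1 : α → ℝ) a| ≤ 1 := by
  by_cases ha : a ∈ A <;> simp [ha]

theorem continuous_integral_of_continuous_of_abs_le {X Y : Type*} [TopologicalSpace X]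
    [MeasurableSpace X] [OpensMeasurableSpace X] [TopologicalSpace Y] [FirstCountableTopology Y]
    {μ : Measure X} [IsFiniteMeasure μ] {F : Y → X → ℝ} (hF : ∀ y, Continuous (F y)) {M : ℝ}
    (hM : ∀ y x, |F y x| ≤ M) (hFx : ∀ x, Continuous fun y => F y x) :
    Continuous fun y => ∫ x, F y x ∂μ :=
  continuous_of_dominated (fun y => (hF y).aestronglyMeasurable)
    (fun y => ae_of_all _ fun x => (Real.norm_eq_abs _).trans_le (hM y x))
    (integrable_const M) (ae_of_all _ hFx)

theorem intervalIntegrable_of_abs_le {f : ℝ → ℝ} (hf : AEStronglyMeasurable f) {M : ℝ}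
    (hM : ∀ s, |f s| ≤ M) (a b : ℝ) : IntervalIntegrable f volume a b :=
  (intervalIntegrable_const (c := M)).mono_fun hf.restrict
    (ae_of_all _ fun s => by simpa only [Real.norm_eq_abs] using (hM s).trans (le_abs_self M))

theorem max_zero_eq_of_mem_uIoc {s t : ℝ} (ht : 0 ≤ t) (hs : s ∈ Set.uIoc 0 t) : max s 0 = s :=
  max_eq_left (Set.uIoc_of_le ht ▸ hs).1.le

theorem abs_sum_fin_le {m : ℕ} {f : Fin m → ℝ} {M : ℝ} (hf : ∀ j, |f j| ≤ M) :
    |∑ j, f j| ≤ m * M :=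
  (Finset.abs_sum_le_sum_abs _ _).trans ((Finset.sum_le_sum fun j _ => hf j).trans_eq (by simp))

theorem abs_pow_sub_pow_le_of_mem_Icc {x y : ℝ} (hx : x ∈ Set.Icc 0 1) (hy : y ∈ Set.Icc 0 1)
    (k : ℕ) : |x ^ k - y ^ k| ≤ k * |x - y| := by
  have hmax : max |x| |y| ^ (k - 1) ≤ 1 :=
    pow_le_one₀ (le_max_of_le_left (abs_nonneg x))
      (max_le (abs_le.2 ⟨by linarith [hx.1], hx.2⟩) (abs_le.2 ⟨by linarith [hy.1], hy.2⟩))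
  calc |x ^ k - y ^ k| ≤ |x - y| * k * max |x| |y| ^ (k - 1) := abs_pow_sub_pow_le ..
    _ ≤ |x - y| * k * 1 := by gcongr
    _ = k * |x - y| := by ring

theorem abs_pow_mul_pow_sub_le {x x' y y' : ℝ} (hx : x ∈ Set.Icc 0 1) (hx' : x' ∈ Set.Icc 0 1)
    (hy : y ∈ Set.Icc 0 1) (hy' : y' ∈ Set.Icc 0 1) (k m : ℕ) :
    |x ^ k * y ^ m - x' ^ k * y' ^ m| ≤ k * |x - x'| + m * |y - y'| := by
  have hym : |y ^ m| ≤ 1 := by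
    rw [abs_of_nonneg (pow_nonneg hy.1 m)]; exact pow_le_one₀ hy.1 hy.2
  have hxk : |x' ^ k| ≤ 1 := by
    rw [abs_of_nonneg (pow_nonneg hx'.1 k)]; exact pow_le_one₀ hx'.1 hx'.2
  calc |x ^ k * y ^ m - x' ^ k * y' ^ m|
      = |(x ^ k - x' ^ k) * y ^ m + x' ^ k * (y ^ m - y' ^ m)| := by congr 1; ring
    _ ≤ |x ^ k - x' ^ k| * |y ^ m| + |x' ^ k| * |y ^ m - y' ^ m| := by
        rw [← abs_mul, ← abs_mul]; exact abs_add_le _ _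
    _ ≤ |x ^ k - x' ^ k| * 1 + 1 * |y ^ m - y' ^ m| := by gcongr
    _ ≤ k * |x - x'| + m * |y - y'| := by
        rw [mul_one, one_mul]
        exact add_le_add (abs_pow_sub_pow_le_of_mem_Icc hx hx' k)
          (abs_pow_sub_pow_le_of_mem_Icc hy hy' m)

namespace MFModel

section MeasDist

variable {μ₁ μ₂ : Measure SState}

theorem bddAbove_range_abs_integral_sub [IsFiniteMeasure μ₁] [IsFiniteMeasure μ₂] :
    BddAbove (Set.range fun φ : {φ : SState →ᵇ ℝ // ‖φ‖ ≤ 1} =>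
      |(∫ u, φ.1 u ∂μ₁) - ∫ u, φ.1 u ∂μ₂|) := by
  refine ⟨μ₁.real Set.univ + μ₂.real Set.univ, ?_⟩
  rintro _ ⟨⟨φ, hφ⟩, rfl⟩
  have h₁ := (φ.norm_integral_le_mul_norm μ₁).trans (mul_le_of_le_one_right measureReal_nonneg hφ)
  have h₂ := (φ.norm_integral_le_mul_norm μ₂).trans (mul_le_of_le_one_right measureReal_nonneg hφ)
  rw [Real.norm_eq_abs] at h₁ h₂
  exact (abs_sub _ _).trans (add_le_add h₁ h₂)

theorem le_measDist [IsFiniteMeasure μ₁] [IsFiniteMeasure μ₂] (φ : SState →ᵇ ℝ) (hφ : ‖φ‖ ≤ 1) :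
    |(∫ u, φ u ∂μ₁) - ∫ u, φ u ∂μ₂| ≤ measDist μ₁ μ₂ :=
  le_ciSup bddAbove_range_abs_integral_sub (⟨φ, hφ⟩ : {φ : SState →ᵇ ℝ // ‖φ‖ ≤ 1})

theorem measDist_nonneg [IsFiniteMeasure μ₁] [IsFiniteMeasure μ₂] : 0 ≤ measDist μ₁ μ₂ :=
  (abs_nonneg _).trans (le_measDist 0 (by simp))

theorem measDist_le {c : ℝ}
    (h : ∀ φ : SState →ᵇ ℝ, ‖φ‖ ≤ 1 → |(∫ u, φ u ∂μ₁) - ∫ u, φ u ∂μ₂| ≤ c) :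
    measDist μ₁ μ₂ ≤ c :=
  haveI : Nonempty {φ : SState →ᵇ ℝ // ‖φ‖ ≤ 1} := ⟨⟨0, by simp⟩⟩
  ciSup_le fun φ => h φ.1 φ.2

theorem measDist_le_two [IsProbabilityMeasure μ₁] [IsProbabilityMeasure μ₂] :
    measDist μ₁ μ₂ ≤ 2 :=
  measDist_le fun φ hφ => by
    have h₁ := (φ.norm_integral_le_norm μ₁).trans hφ
    have h₂ := (φ.norm_integral_le_norm μ₂).trans hφ
    rw [Real.norm_eq_abs] at h₁ h₂
    linarith [abs_sub (∫ u, φ u ∂μ₁) (∫ u, φ u ∂μ₂)]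

theorem abs_integral_sub_le_norm_mul_measDist [IsFiniteMeasure μ₁] [IsFiniteMeasure μ₂]
    (φ : SState →ᵇ ℝ) : |(∫ u, φ u ∂μ₁) - ∫ u, φ u ∂μ₂| ≤ ‖φ‖ * measDist μ₁ μ₂ := by
  rcases eq_or_ne φ 0 with rfl | hφ
  · simp
  have hnorm : 0 < ‖φ‖ := norm_pos_iff.2 hφ
  have h := le_measDist (μ₁ := μ₁) (μ₂ := μ₂) (‖φ‖⁻¹ • φ) (norm_smul_inv_norm hφ).le
  simp only [BoundedContinuousFunction.coe_smul, smul_eq_mul, integral_const_mul,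
    ← mul_sub, abs_mul, abs_inv, abs_norm] at h
  rwa [inv_mul_le_iff₀ hnorm] at h

theorem abs_integral_sub_le_mul_measDist [IsFiniteMeasure μ₁] [IsFiniteMeasure μ₂]
    {f : SState → ℝ} (hf : Continuous f) {M : ℝ} (hM : ∀ u, |f u| ≤ M) :
    |(∫ u, f u ∂μ₁) - ∫ u, f u ∂μ₂| ≤ M * measDist μ₁ μ₂ :=
  (abs_integral_sub_le_norm_mul_measDist (.ofNormedAddCommGroup f hf M hM)).trans <|
    mul_le_mul_of_nonneg_right
      (BoundedContinuousFunction.norm_ofNormedAddCommGroup_le _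
        ((abs_nonneg _).trans (hM ⟨0, 0⟩)) _)
      measDist_nonneg

theorem abs_measureReal_sub_le_measDist [IsFiniteMeasure μ₁] [IsFiniteMeasure μ₂]
    {A : Set SState} (hA : IsClopen A) :
    |μ₁.real A - μ₂.real A| ≤ measDist μ₁ μ₂ := by
  have h := abs_integral_sub_le_mul_measDist (μ₁ := μ₁) (μ₂ := μ₂)
    (hA.continuous_indicator (f := (1 : SState → ℝ)) continuous_const) (abs_indicator_one_le_one A)
  rwa [one_mul, integral_indicator_one hA.isOpen.measurableSet,
    integral_indicator_one hA.isOpen.measurableSet] at h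

end MeasDist

theorem isClopen_setOf_fst_mem (s : Set ℕ) : IsClopen {u : SState | u.1 ∈ s} :=
  (isClopen_discrete s).preimage (continuous_sigma fun _ => continuous_const)

theorem Rbar_eq_measureReal (C : ℕ) (ν : Measure SState) [IsFiniteMeasure ν] (n : ℕ) :
    Rbar C ν n = ν.real {u : SState | u.1 ∈ Finset.Icc n C} := by
  have hunion : {u : SState | u.1 ∈ Finset.Icc n C} = ⋃ m ∈ Finset.Icc n C, level m := by
    ext u
    simp [level]
  rw [hunion, measureReal_biUnion_finset (f := level)
    (fun i _ j _ hij => Set.disjoint_left.2 fun _ hi hj => hij (hi.symm.trans hj))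
    fun m _ => (isClopen_setOf_fst_mem {m}).isOpen.measurableSet]
  rfl

theorem Rbar_nonneg (C : ℕ) (ν : Measure SState) (n : ℕ) : 0 ≤ Rbar C ν n :=
  Finset.sum_nonneg fun _ _ => ENNReal.toReal_nonneg

theorem Rbar_le_one (C : ℕ) (ν : Measure SState) [IsProbabilityMeasure ν] (n : ℕ) :
    Rbar C ν n ≤ 1 := by
  rw [Rbar_eq_measureReal]
  exact measureReal_le_one

theorem abs_Rbar_sub_le (C : ℕ) {ν₁ ν₂ : Measure SState} [IsFiniteMeasure ν₁]
    [IsFiniteMeasure ν₂] (n : ℕ) : |Rbar C ν₁ n - Rbar C ν₂ n| ≤ measDist ν₁ ν₂ := by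
  rw [Rbar_eq_measureReal, Rbar_eq_measureReal]
  exact abs_measureReal_sub_le_measDist (isClopen_setOf_fst_mem _)

section Phi

variable (C d : ℕ)

theorem Rbar_mem_Icc (ν : Measure SState) [IsProbabilityMeasure ν] (n : ℕ) :
    Rbar C ν n ∈ Set.Icc 0 1 :=
  ⟨Rbar_nonneg C ν n, Rbar_le_one C ν n⟩

theorem Phi_nonneg (ν : Measure SState) (n : ℕ) : 0 ≤ Phi C d ν n :=
  Finset.sum_nonneg fun _ _ => by
    have := Rbar_nonneg C ν n
    have := Rbar_nonneg C ν (n + 1)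
    positivity

theorem Phi_le (ν : Measure SState) [IsProbabilityMeasure ν] (n : ℕ) : Phi C d ν n ≤ d := by
  calc Phi C d ν n ≤ ∑ _k ∈ Finset.range d, (1 : ℝ) :=
        Finset.sum_le_sum fun k _ => mul_le_one₀
          (pow_le_one₀ (Rbar_nonneg C ν n) (Rbar_le_one C ν n))
          (pow_nonneg (Rbar_nonneg C ν (n + 1)) _)
          (pow_le_one₀ (Rbar_nonneg C ν (n + 1)) (Rbar_le_one C ν (n + 1)))
    _ = d := by simp

theorem abs_Phi_sub_le {ν₁ ν₂ : Measure SState} [IsProbabilityMeasure ν₁]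
    [IsProbabilityMeasure ν₂] (n : ℕ) :
    |Phi C d ν₁ n - Phi C d ν₂ n| ≤ d ^ 2 * measDist ν₁ ν₂ := by
  have hδ := measDist_nonneg (μ₁ := ν₁) (μ₂ := ν₂)
  have hterm : ∀ k ∈ Finset.range d,
      |Rbar C ν₁ n ^ k * Rbar C ν₁ (n + 1) ^ (d - 1 - k)
        - Rbar C ν₂ n ^ k * Rbar C ν₂ (n + 1) ^ (d - 1 - k)| ≤ d * measDist ν₁ ν₂ := by
    intro k hk
    have hkd : (k : ℝ) + (d - 1 - k : ℕ) ≤ d := by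
      have := Finset.mem_range.1 hk
      exact_mod_cast (by omega : k + (d - 1 - k) ≤ d)
    calc _ ≤ k * |Rbar C ν₁ n - Rbar C ν₂ n|
          + (d - 1 - k : ℕ) * |Rbar C ν₁ (n + 1) - Rbar C ν₂ (n + 1)| :=
          abs_pow_mul_pow_sub_le (Rbar_mem_Icc C ν₁ n) (Rbar_mem_Icc C ν₂ n)
            (Rbar_mem_Icc C ν₁ (n + 1)) (Rbar_mem_Icc C ν₂ (n + 1)) k _
      _ ≤ k * measDist ν₁ ν₂ + (d - 1 - k : ℕ) * measDist ν₁ ν₂ := by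
          gcongr <;> exact abs_Rbar_sub_le C _
      _ ≤ d * measDist ν₁ ν₂ := by rw [← add_mul]; gcongr
  calc |Phi C d ν₁ n - Phi C d ν₂ n| ≤ ∑ _k ∈ Finset.range d, d * measDist ν₁ ν₂ := by
        rw [Phi, Phi, ← Finset.sum_sub_distrib]
        exact (Finset.abs_sum_le_sum_abs _ _).trans (Finset.sum_le_sum hterm)
    _ = d ^ 2 * measDist ν₁ ν₂ := by
        rw [Finset.sum_const, Finset.card_range, nsmul_eq_mul]
        ring

end Phi

section Generator

def deathKernel (β : ℝ≥0 → ℝ) (ψ : SState → ℝ) (n : ℕ) (x : Fin (n + 1) → ℝ≥0) : ℝ :=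
  ∑ j : Fin (n + 1), β (x j) * (ψ ⟨n, x ∘ j.succAbove⟩ - ψ ⟨n + 1, x⟩)

def arrivalKernel (ψ : SState → ℝ) (n : ℕ) (x : Fin n → ℝ≥0) : ℝ :=
  ∑ j : Fin (n + 1), (ψ ⟨n + 1, j.insertNth 0 x⟩ - ψ ⟨n, x⟩)

noncomputable def deathPart (C : ℕ) (β : ℝ≥0 → ℝ) (ψ : SState → ℝ) (u : SState) : ℝ :=
  ∑ n ∈ Finset.range C, Function.extend (Sigma.mk (n + 1)) (deathKernel β ψ n) 0 u

noncomputable def arrivalPart (C : ℕ) (a : ℕ → ℝ) (ψ : SState → ℝ) (u : SState) : ℝ :=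
  ∑ n ∈ insert 0 (Finset.Icc 1 (C - 1)),
    Function.extend (Sigma.mk n) (fun x => a n * arrivalKernel ψ n x) 0 u

variable (C : ℕ) (β : ℝ≥0 →ᵇ ℝ) (ψ : SState →ᵇ ℝ)

theorem continuous_deathKernel (n : ℕ) : Continuous (deathKernel β ψ n) := by
  unfold deathKernel
  fun_prop

theorem continuous_arrivalKernel (n : ℕ) : Continuous (arrivalKernel ψ n) := by
  unfold arrivalKernel
  fun_prop

theorem abs_sub_le_two_norm (v w : SState) : |ψ v - ψ w| ≤ 2 * ‖ψ‖ := by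
  simpa only [Real.dist_eq] using ψ.dist_le_two_norm v w

theorem abs_mul_sub_le (b : ℝ≥0) (v w : SState) : |β b * (ψ v - ψ w)| ≤ ‖β‖ * (2 * ‖ψ‖) := by
  rw [abs_mul]
  exact mul_le_mul (by simpa only [Real.norm_eq_abs] using β.norm_coe_le_norm b)
    (abs_sub_le_two_norm ψ v w) (abs_nonneg _) (norm_nonneg β)

theorem abs_deathKernel_le (n : ℕ) (x : Fin (n + 1) → ℝ≥0) :
    |deathKernel β ψ n x| ≤ (n + 1) * (2 * ‖β‖ * ‖ψ‖) :=
  (abs_sum_fin_le fun _ => abs_mul_sub_le β ψ _ _ _).trans_eq (by push_cast; ring)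

theorem abs_arrivalKernel_le (n : ℕ) (x : Fin n → ℝ≥0) :
    |arrivalKernel ψ n x| ≤ (n + 1) * (2 * ‖ψ‖) :=
  (abs_sum_fin_le fun _ => abs_sub_le_two_norm ψ _ _).trans_eq (by push_cast; ring)

theorem continuous_deathPart : Continuous (deathPart C β ψ) :=
  continuous_finsetSum _ fun n _ => continuous_extend_sigmaMk (continuous_deathKernel β ψ n)

theorem continuous_arrivalPart (a : ℕ → ℝ) : Continuous (arrivalPart C a ψ) :=
  continuous_finsetSum _ fun n _ =>
    continuous_extend_sigmaMk (continuous_const.mul (continuous_arrivalKernel ψ n))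

theorem abs_deathPart_le (u : SState) : |deathPart C β ψ u| ≤ 2 * C * ‖β‖ * ‖ψ‖ :=
  abs_sum_extend_sigmaMk_le (add_left_injective 1) (by positivity) fun n hn x =>
    (abs_deathKernel_le β ψ n x).trans <| by
      have hn' : (n : ℝ) + 1 ≤ C := by exact_mod_cast Finset.mem_range.1 hn
      exact (mul_le_mul_of_nonneg_right hn' (by positivity)).trans_eq (by ring)

theorem abs_arrivalPart_le {a : ℕ → ℝ} {A : ℝ} (ha : ∀ n, |a n| * (n + 1) ≤ A) (u : SState) :
    |arrivalPart C a ψ u| ≤ 2 * A * ‖ψ‖ := by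
  have hA : 0 ≤ A := (by positivity : 0 ≤ |a 0| * ((0 : ℕ) + 1)).trans (ha 0)
  refine abs_sum_extend_sigmaMk_le (lvl := id) Function.injective_id (by positivity)
    fun n _ x => ?_
  rw [abs_mul]
  calc |a n| * |arrivalKernel ψ n x| ≤ |a n| * ((n + 1) * (2 * ‖ψ‖)) := by
        gcongr; exact abs_arrivalKernel_le ψ n x
    _ = (|a n| * (n + 1)) * (2 * ‖ψ‖) := by ring
    _ ≤ A * (2 * ‖ψ‖) := by gcongr; exact ha n
    _ = 2 * A * ‖ψ‖ := by ring

instance (ν : Measure SState) [IsFiniteMeasure ν] (n : ℕ) : IsFiniteMeasure (fiber ν n) := by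
  unfold fiber
  infer_instance

theorem fiber_univ (ν : Measure SState) (n : ℕ) : fiber ν n Set.univ = ν (level n) := by
  have hfiber : fiber ν n = ν.comap (Sigma.mk n) := rfl
  rw [hfiber, (measurableEmbedding_sigmaMk n).comap_apply, Set.image_univ, Set.range_sigmaMk]
  rfl

theorem integral_extend_sigmaMk_eq_integral_fiber (ν : Measure SState) {n : ℕ}
    (h : (Fin n → ℝ≥0) → ℝ) :
    ∫ u, Function.extend (Sigma.mk n) h 0 u ∂ν = ∫ x, h x ∂(fiber ν n) :=
  integral_extend_sigmaMk ν

variable {ν : Measure SState} [IsFiniteMeasure ν]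

theorem integral_deathPart :
    ∫ u, deathPart C β ψ u ∂ν = ∑ n ∈ Finset.range C, ∑ j : Fin (n + 1),
      ∫ x, β (x j) * (ψ ⟨n, x ∘ j.succAbove⟩ - ψ ⟨n + 1, x⟩) ∂(fiber ν (n + 1)) := by
  unfold deathPart
  rw [integral_finsetSum _ fun n _ => integrable_of_continuous_of_abs_le
    (continuous_extend_sigmaMk (continuous_deathKernel β ψ n))
    fun _ => abs_extend_sigmaMk_le (by positivity) (abs_deathKernel_le β ψ n)]
  refine Finset.sum_congr rfl fun n _ => ?_
  rw [integral_extend_sigmaMk_eq_integral_fiber]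
  exact integral_finsetSum _ fun j _ =>
    integrable_of_continuous_of_abs_le (by fun_prop) fun x => abs_mul_sub_le β ψ _ _ _

theorem integral_arrivalPart (a : ℕ → ℝ) :
    ∫ u, arrivalPart C a ψ u ∂ν = ∑ n ∈ insert 0 (Finset.Icc 1 (C - 1)),
      a n * ∫ u, Function.extend (Sigma.mk n) (arrivalKernel ψ n) 0 u ∂ν := by
  have hint (n : ℕ) :
      Integrable (Function.extend (Sigma.mk n) (fun x => a n * arrivalKernel ψ n x) 0) ν :=
    integrable_of_continuous_of_abs_le
      (continuous_extend_sigmaMk (continuous_const.mul (continuous_arrivalKernel ψ n)))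
      fun _ => abs_extend_sigmaMk_le (by positivity) fun x => (abs_mul _ _).trans_le
        (mul_le_mul_of_nonneg_left (abs_arrivalKernel_le ψ n x) (abs_nonneg _))
  unfold arrivalPart
  rw [integral_finsetSum _ fun n _ => hint n]
  refine Finset.sum_congr rfl fun n _ => ?_
  rw [integral_extend_sigmaMk_eq_integral_fiber, integral_extend_sigmaMk_eq_integral_fiber,
    integral_const_mul]

theorem integral_arrivalPart_sub (a b : ℕ → ℝ) :
    ∫ u, arrivalPart C a ψ u ∂ν - ∫ u, arrivalPart C b ψ u ∂ν
      = ∫ u, arrivalPart C (a - b) ψ u ∂ν := by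
  simp only [integral_arrivalPart, ← Finset.sum_sub_distrib, ← sub_mul, Pi.sub_apply]

theorem integral_extend_arrivalKernel (n : ℕ) :
    ∫ u, Function.extend (Sigma.mk n) (arrivalKernel ψ n) 0 u ∂ν
      = ∑ j : Fin (n + 1), ∫ x, (ψ ⟨n + 1, j.insertNth 0 x⟩ - ψ ⟨n, x⟩) ∂(fiber ν n) := by
  rw [integral_extend_sigmaMk_eq_integral_fiber]
  exact integral_finsetSum _ fun j _ =>
    integrable_of_continuous_of_abs_le (by fun_prop) fun x => abs_sub_le_two_norm ψ _ _

theorem arrivalKernel_zero (x : Fin 0 → ℝ≥0) :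
    arrivalKernel ψ 0 x = ψ oneZero - ψ emptyState := by
  rw [arrivalKernel, Fin.sum_univ_one]
  congr 3
  · exact funext fun i => by rw [Fin.eq_zero i, Fin.insertNth_apply_same]
  · exact funext fun i => i.elim0

theorem drift_eq_integral (d : ℕ) (lam : ℝ) :
    drift C d lam β ψ ν = ∫ u, deathPart C β ψ u ∂ν
      + lam * ∫ u, arrivalPart C (fun n => Phi C d ν n / (n + 1)) ψ u ∂ν := by
  rw [drift, integral_deathPart, integral_arrivalPart, Finset.sum_insert (by simp)]
  congr 3
  · rw [integral_extend_sigmaMk_eq_integral_fiber]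
    simp only [arrivalKernel_zero, integral_const, smul_eq_mul, measureReal_def, fiber_univ,
      Nat.cast_zero, zero_add, div_one]
    ring
  · exact Finset.sum_congr rfl fun n _ => by rw [integral_extend_arrivalKernel]

end Generator

section Lipschitz

variable (C d : ℕ) (β : ℝ≥0 →ᵇ ℝ) (ψ : SState →ᵇ ℝ) {lam : ℝ}

theorem abs_div_succ_mul_succ (x : ℝ) (n : ℕ) : |x / (n + 1)| * (n + 1) = |x| := by
  rw [abs_div, abs_of_pos (by positivity : (0 : ℝ) < n + 1), div_mul_cancel₀ _ (by positivity)]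

theorem abs_Phi_div_succ_mul_succ_le (ν : Measure SState) [IsProbabilityMeasure ν] (n : ℕ) :
    |Phi C d ν n / (n + 1)| * (n + 1) ≤ d := by
  rw [abs_div_succ_mul_succ, abs_of_nonneg (Phi_nonneg C d ν n)]
  exact Phi_le C d ν n

theorem abs_drift_le (hlam : 0 ≤ lam) (ν : Measure SState) [IsProbabilityMeasure ν] :
    |drift C d lam β ψ ν| ≤ (2 * C * ‖β‖ + 2 * d * lam) * ‖ψ‖ := by
  have hD := abs_integral_le_of_abs_le (μ := ν) (abs_deathPart_le C β ψ)
  have hA := abs_integral_le_of_abs_le (μ := ν)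
    (abs_arrivalPart_le C ψ (abs_Phi_div_succ_mul_succ_le C d ν))
  rw [drift_eq_integral]
  calc _ ≤ _ := abs_add_le _ _
    _ = |∫ u, deathPart C β ψ u ∂ν|
        + lam * |∫ u, arrivalPart C (fun n => Phi C d ν n / (n + 1)) ψ u ∂ν| := by
        rw [abs_mul, abs_of_nonneg hlam]
    _ ≤ 2 * C * ‖β‖ * ‖ψ‖ + lam * (2 * d * ‖ψ‖) := by gcongr
    _ = (2 * C * ‖β‖ + 2 * d * lam) * ‖ψ‖ := by ring

theorem abs_drift_sub_drift_le (hlam : 0 ≤ lam) {ν₁ ν₂ : Measure SState}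
    [IsProbabilityMeasure ν₁] [IsProbabilityMeasure ν₂] :
    |drift C d lam β ψ ν₁ - drift C d lam β ψ ν₂|
      ≤ (2 * C * ‖β‖ + 8 * d ^ 2 * lam) * ‖ψ‖ * measDist ν₁ ν₂ := by
  rw [drift_eq_integral, drift_eq_integral]
  set a₁ : ℕ → ℝ := fun n => Phi C d ν₁ n / (n + 1)
  set a₂ : ℕ → ℝ := fun n => Phi C d ν₂ n / (n + 1)
  set δ := measDist ν₁ ν₂
  have hδ : 0 ≤ δ := measDist_nonneg
  have ha₁₂ (n : ℕ) : |(a₁ - a₂) n| * (n + 1) ≤ d ^ 2 * δ := by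
    rw [Pi.sub_apply, ← sub_div, abs_div_succ_mul_succ]
    exact abs_Phi_sub_le C d n
  have hD := abs_integral_sub_le_mul_measDist (μ₁ := ν₁) (μ₂ := ν₂)
    (continuous_deathPart C β ψ) (abs_deathPart_le C β ψ)
  have hA₁ := abs_integral_sub_le_mul_measDist (μ₁ := ν₁) (μ₂ := ν₂)
    (continuous_arrivalPart C ψ a₁)
    (abs_arrivalPart_le C ψ (abs_Phi_div_succ_mul_succ_le C d ν₁))
  have hA₁₂ := abs_integral_le_of_abs_le (μ := ν₂) (abs_arrivalPart_le C ψ ha₁₂)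
  rw [← integral_arrivalPart_sub] at hA₁₂
  have hd : (d : ℝ) ≤ d ^ 2 := by exact_mod_cast Nat.le_self_pow two_ne_zero d
  calc _ = |((∫ u, deathPart C β ψ u ∂ν₁) - ∫ u, deathPart C β ψ u ∂ν₂)
          + lam * (((∫ u, arrivalPart C a₁ ψ u ∂ν₁) - ∫ u, arrivalPart C a₁ ψ u ∂ν₂)
            + ((∫ u, arrivalPart C a₁ ψ u ∂ν₂) - ∫ u, arrivalPart C a₂ ψ u ∂ν₂))| := by
        congr 1; ring
    _ ≤ |(∫ u, deathPart C β ψ u ∂ν₁) - ∫ u, deathPart C β ψ u ∂ν₂|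
          + lam * (|(∫ u, arrivalPart C a₁ ψ u ∂ν₁) - ∫ u, arrivalPart C a₁ ψ u ∂ν₂|
            + |(∫ u, arrivalPart C a₁ ψ u ∂ν₂) - ∫ u, arrivalPart C a₂ ψ u ∂ν₂|) := by
        refine (abs_add_le _ _).trans (add_le_add le_rfl ?_)
        rw [abs_mul, abs_of_nonneg hlam]
        exact mul_le_mul_of_nonneg_left (abs_add_le _ _) hlam
    _ ≤ 2 * C * ‖β‖ * ‖ψ‖ * δ + lam * (2 * d * ‖ψ‖ * δ + 2 * (d ^ 2 * δ) * ‖ψ‖) := by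
        gcongr
    _ ≤ (2 * C * ‖β‖ + 8 * d ^ 2 * lam) * ‖ψ‖ * δ := by
        nlinarith [mul_nonneg (mul_nonneg (mul_nonneg hlam (norm_nonneg ψ)) hδ)
          (by linarith : (0 : ℝ) ≤ 6 * d ^ 2 - 2 * d)]

end Lipschitz

section Shift

theorem continuous_shift (y : ℝ) : Continuous (shift y) :=
  continuous_sigma fun n => by
    show Continuous fun x : Fin n → ℝ≥0 => (⟨n, fun i => x i + y.toNNReal⟩ : SState)
    fun_prop

@[fun_prop]
theorem continuous_shift_apply (u : SState) : Continuous fun y => shift y u := by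
  unfold shift
  fun_prop

theorem WeaklyContinuous.continuous_integral_max {ν : ℝ → Measure SState}
    (hw : WeaklyContinuous ν) (f : SState →ᵇ ℝ) : Continuous fun s => ∫ u, f u ∂ν (max s 0) :=
  (hw f).comp_continuous (continuous_id.max continuous_const) fun s => le_max_right s 0

end Shift

section PathContinuity

variable {C d : ℕ} {lam : ℝ} (β : ℝ≥0 →ᵇ ℝ) {X : Type*} [TopologicalSpace X]

theorem continuous_integral_of_abs_le {ν : X → Measure SState}
    (hν : ∀ f : SState →ᵇ ℝ, Continuous fun x => ∫ u, f u ∂ν x) {f : SState → ℝ}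
    (hf : Continuous f) {M : ℝ} (hM : ∀ u, |f u| ≤ M) : Continuous fun x => ∫ u, f u ∂ν x :=
  hν (.ofNormedAddCommGroup f hf M fun u => (Real.norm_eq_abs _).trans_le (hM u))

theorem lowerSemicontinuous_measDist {μ₁ μ₂ : X → Measure SState}
    [∀ x, IsFiniteMeasure (μ₁ x)] [∀ x, IsFiniteMeasure (μ₂ x)]
    (h₁ : ∀ f : SState →ᵇ ℝ, Continuous fun x => ∫ u, f u ∂μ₁ x)
    (h₂ : ∀ f : SState →ᵇ ℝ, Continuous fun x => ∫ u, f u ∂μ₂ x) :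
    LowerSemicontinuous fun x => measDist (μ₁ x) (μ₂ x) :=
  lowerSemicontinuous_ciSup (fun _ => bddAbove_range_abs_integral_sub)
    fun φ => ((h₁ φ.1).sub (h₂ φ.1)).abs.lowerSemicontinuous

variable {ν : X → Measure SState} [∀ x, IsFiniteMeasure (ν x)]

theorem continuous_Rbar (hν : ∀ f : SState →ᵇ ℝ, Continuous fun x => ∫ u, f u ∂ν x) (n : ℕ) :
    Continuous fun x => Rbar C (ν x) n := by
  have hA := isClopen_setOf_fst_mem (Finset.Icc n C : Set ℕ)
  have hRbar : (fun x => Rbar C (ν x) n) = fun x => ∫ u, Set.indicator _ 1 u ∂ν x :=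
    funext fun x => by
      rw [Rbar_eq_measureReal, integral_indicator_one hA.isOpen.measurableSet]
      rfl
  rw [hRbar]
  exact continuous_integral_of_abs_le hν (hA.continuous_indicator continuous_const)
    (abs_indicator_one_le_one _)

theorem continuous_Phi (hν : ∀ f : SState →ᵇ ℝ, Continuous fun x => ∫ u, f u ∂ν x) (n : ℕ) :
    Continuous fun x => Phi C d (ν x) n := by
  have := continuous_Rbar (C := C) hν n
  have := continuous_Rbar (C := C) hν (n + 1)
  unfold Phi
  fun_prop

theorem continuous_drift (hν : ∀ f : SState →ᵇ ℝ, Continuous fun x => ∫ u, f u ∂ν x)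
    (ψ : SState →ᵇ ℝ) : Continuous fun x => drift C d lam β ψ (ν x) := by
  have hD := continuous_integral_of_abs_le hν (continuous_deathPart C β ψ) (abs_deathPart_le C β ψ)
  have hA (n : ℕ) := continuous_integral_of_abs_le hν
    (continuous_extend_sigmaMk (continuous_arrivalKernel ψ n))
    fun _ => abs_extend_sigmaMk_le (by positivity) (abs_arrivalKernel_le ψ n)
  have hΦ (n : ℕ) := continuous_Phi (C := C) (d := d) hν n
  simp_rw [drift_eq_integral, integral_arrivalPart]
  fun_prop

end PathContinuity

section DriftAlongPaths

variable {C d : ℕ} {lam : ℝ} (β : ℝ≥0 →ᵇ ℝ)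

theorem continuous_drift_shift (μ : Measure SState) [IsProbabilityMeasure μ] (φ : SState →ᵇ ℝ) :
    Continuous fun y => drift C d lam β (fun u => φ (shift y u)) μ := by
  let ψ (y : ℝ) : SState →ᵇ ℝ := φ.compContinuous ⟨shift y, continuous_shift y⟩
  have hψ (y : ℝ) : ‖ψ y‖ ≤ ‖φ‖ := φ.norm_compContinuous_le _
  change Continuous fun y => drift C d lam β (ψ y) μ
  simp_rw [drift_eq_integral]
  refine .add ?_ (continuous_const.mul ?_)
  · refine continuous_integral_of_continuous_of_abs_le (fun y => continuous_deathPart C β (ψ y))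
      (fun y u => (abs_deathPart_le C β (ψ y) u).trans
        (mul_le_mul_of_nonneg_left (hψ y) (by positivity))) fun u => ?_
    refine continuous_finsetSum _ fun n _ => continuous_extend_sigmaMk_apply fun x => ?_
    simp only [deathKernel, ψ, BoundedContinuousFunction.compContinuous_apply, ContinuousMap.coe_mk]
    fun_prop
  · refine continuous_integral_of_continuous_of_abs_le (fun y => continuous_arrivalPart C (ψ y) _)
      (fun y u => (abs_arrivalPart_le C (ψ y) (abs_Phi_div_succ_mul_succ_le C d μ) u).trans
        (mul_le_mul_of_nonneg_left (hψ y) (by positivity)))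
      fun u => ?_
    refine continuous_finsetSum _ fun n _ => continuous_extend_sigmaMk_apply fun x => ?_
    simp only [arrivalKernel, ψ, BoundedContinuousFunction.compContinuous_apply,
      ContinuousMap.coe_mk]
    fun_prop

theorem stronglyMeasurable_drift_shift {ν : ℝ → Measure SState}
    [∀ s, IsProbabilityMeasure (ν s)]
    (hν : ∀ f : SState →ᵇ ℝ, Continuous fun s => ∫ u, f u ∂ν s) (φ : SState →ᵇ ℝ) (t : ℝ) :
    StronglyMeasurable fun s => drift C d lam β (fun u => φ (shift (t - s) u)) (ν s) := by
  let D (y s : ℝ) : ℝ := drift C d lam β (fun u => φ (shift y u)) (ν s)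
  have hD : StronglyMeasurable (Function.uncurry D) :=
    stronglyMeasurable_uncurry_of_continuous_of_stronglyMeasurable
      (fun s => continuous_drift_shift β (ν s) φ) fun y =>
        (continuous_drift β hν (φ.compContinuous ⟨shift y, continuous_shift y⟩)).stronglyMeasurable
  simpa only [Function.comp_def, Function.uncurry_apply_pair, D] using
    hD.comp_measurable (by fun_prop : Measurable fun s : ℝ => (t - s, s))

theorem intervalIntegrable_drift_shift (hlam : 0 ≤ lam) {ν : ℝ → Measure SState}
    (hP : ∀ s ≥ 0, IsProbabilityMeasure (ν s)) (hw : WeaklyContinuous ν) (φ : SState →ᵇ ℝ)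
    {t : ℝ} (ht : 0 ≤ t) :
    IntervalIntegrable (fun s => drift C d lam β (fun u => φ (shift (t - s) u)) (ν s))
      volume 0 t := by
  -- `ν (max s 0)` is weakly continuous on all of `ℝ` and agrees with `ν` on `(0, t]`.
  have (s : ℝ) : IsProbabilityMeasure (ν (max s 0)) := hP _ (le_max_right s 0)
  have hbound (s : ℝ) :
      |drift C d lam β (fun u => φ (shift (t - s) u)) (ν (max s 0))|
        ≤ (2 * C * ‖β‖ + 2 * d * lam) * ‖φ‖ :=
    (abs_drift_le C d β (φ.compContinuous ⟨shift (t - s), continuous_shift _⟩) hlam _).trans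
      (mul_le_mul_of_nonneg_left (φ.norm_compContinuous_le _) (by positivity))
  have hmax := intervalIntegrable_of_abs_le
    (stronglyMeasurable_drift_shift β hw.continuous_integral_max φ t).aestronglyMeasurable
    hbound 0 t
  exact (intervalIntegrable_congr fun s hs => by
    simp only [max_zero_eq_of_mem_uIoc ht hs]).1 hmax

theorem intervalIntegrable_measDist {ν₁ ν₂ : ℝ → Measure SState}
    (hP₁ : ∀ s ≥ 0, IsProbabilityMeasure (ν₁ s)) (hw₁ : WeaklyContinuous ν₁)
    (hP₂ : ∀ s ≥ 0, IsProbabilityMeasure (ν₂ s)) (hw₂ : WeaklyContinuous ν₂) {t : ℝ} (ht : 0 ≤ t) :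
    IntervalIntegrable (fun s => measDist (ν₁ s) (ν₂ s)) volume 0 t := by
  have (s : ℝ) : IsProbabilityMeasure (ν₁ (max s 0)) := hP₁ _ (le_max_right s 0)
  have (s : ℝ) : IsProbabilityMeasure (ν₂ (max s 0)) := hP₂ _ (le_max_right s 0)
  have hmax := intervalIntegrable_of_abs_le
    (lowerSemicontinuous_measDist hw₁.continuous_integral_max
      hw₂.continuous_integral_max).measurable.aestronglyMeasurable
    (fun s => (abs_of_nonneg measDist_nonneg).trans_le measDist_le_two) 0 t
  exact (intervalIntegrable_congr fun s hs => by
    simp only [max_zero_eq_of_mem_uIoc ht hs]).1 hmax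

theorem abs_integral_drift_shift_sub_le (hlam : 0 ≤ lam) {ν₁ ν₂ : ℝ → Measure SState}
    (hP₁ : ∀ s ≥ 0, IsProbabilityMeasure (ν₁ s)) (hw₁ : WeaklyContinuous ν₁)
    (hP₂ : ∀ s ≥ 0, IsProbabilityMeasure (ν₂ s)) (hw₂ : WeaklyContinuous ν₂)
    {φ : SState →ᵇ ℝ} (hφ : ‖φ‖ ≤ 1) {t : ℝ} (ht : 0 ≤ t) :
    |(∫ s in (0 : ℝ)..t, drift C d lam β (fun u => φ (shift (t - s) u)) (ν₁ s))
        - ∫ s in (0 : ℝ)..t, drift C d lam β (fun u => φ (shift (t - s) u)) (ν₂ s)|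
      ≤ (2 * C * ‖β‖ + 8 * d ^ 2 * lam) * ∫ s in (0 : ℝ)..t, measDist (ν₁ s) (ν₂ s) := by
  have hD₁ := intervalIntegrable_drift_shift (C := C) (d := d) β hlam hP₁ hw₁ φ ht
  have hD₂ := intervalIntegrable_drift_shift (C := C) (d := d) β hlam hP₂ hw₂ φ ht
  rw [← intervalIntegral.integral_sub hD₁ hD₂, ← intervalIntegral.integral_const_mul]
  refine (intervalIntegral.abs_integral_le_integral_abs ht).trans
    (intervalIntegral.integral_mono_on ht (hD₁.sub hD₂).abs
      ((intervalIntegrable_measDist hP₁ hw₁ hP₂ hw₂ ht).const_mul _) fun s hs => ?_)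
  have := hP₁ s hs.1
  have := hP₂ s hs.1
  refine (abs_drift_sub_drift_le C d β (φ.compContinuous ⟨shift (t - s), continuous_shift _⟩)
    hlam).trans (mul_le_mul_of_nonneg_right ?_ measDist_nonneg)
  exact mul_le_of_le_one_right (by positivity) ((φ.norm_compContinuous_le _).trans hφ)

end DriftAlongPaths

theorem isCb_coe (φ : SState →ᵇ ℝ) : IsCb φ :=
  ⟨φ.continuous, ‖φ‖, fun u => (Real.norm_eq_abs _).symm.trans_le (φ.norm_coe_le_norm u)⟩

theorem mild_solutions_gronwall_ineq_general
    (C d : ℕ) (lam : ℝ) (hlam : 0 < lam)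
    (β : BoundedContinuousFunction ℝ≥0 ℝ)
    (ν₁ ν₂ : ℝ → Measure SState)
    (h₁ : IsMildSolution C d lam (fun x => β x) ν₁)
    (h₂ : IsMildSolution C d lam (fun x => β x) ν₂) :
    ∀ t ≥ (0 : ℝ),
      measDist (ν₁ t) (ν₂ t) ≤
        measDist (ν₁ 0) (ν₂ 0) +
          (2 * (C : ℝ) * ‖β‖ + 8 * (d : ℝ) ^ 2 * lam) *
            ∫ s in (0 : ℝ)..t, measDist (ν₁ s) (ν₂ s) := by
  intro t ht
  obtain ⟨hP₁, hw₁, hmild₁⟩ := h₁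
  obtain ⟨hP₂, hw₂, hmild₂⟩ := h₂
  have := (hP₁ 0 le_rfl).1
  have := (hP₂ 0 le_rfl).1
  refine measDist_le fun φ hφ => ?_
  have hinit := le_measDist (μ₁ := ν₁ 0) (μ₂ := ν₂ 0)
    (φ.compContinuous ⟨shift t, continuous_shift t⟩) ((φ.norm_compContinuous_le _).trans hφ)
  have hdrift := abs_integral_drift_shift_sub_le (C := C) (d := d) β hlam.le
    (fun s hs => (hP₁ s hs).1) hw₁ (fun s hs => (hP₂ s hs).1) hw₂ hφ ht
  have hm₁ := hmild₁ φ (isCb_coe φ) t ht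
  have hm₂ := hmild₂ φ (isCb_coe φ) t ht
  unfold pair at hm₁ hm₂
  rw [hm₁, hm₂, add_sub_add_comm]
  exact (abs_add_le _ _).trans (add_le_add hinit hdrift)

/-- **Grönwall-type integral inequality for two mild solutions.**
If `(ν¹_t)` and `(ν²_t)` are two weakly continuous paths of probability measures on `𝒰`
each satisfying the mild-form mean-field equation, then for every `t ≥ 0`,
`‖ν¹_t − ν²_t‖ ≤ ‖ν¹_0 − ν²_0‖ + (2C‖β‖_∞ + 8d²λ) ∫_0^t ‖ν¹_s − ν²_s‖ ds`,
where `‖·‖` is the dual bounded-continuous norm `measDist`. -/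
theorem mild_solutions_gronwall_ineq
    (C d : ℕ) (hC : 1 ≤ C) (hd : 1 ≤ d) (lam : ℝ) (hlam : 0 < lam)
    (β : BoundedContinuousFunction ℝ≥0 ℝ) (hβnn : ∀ x, 0 ≤ β x)
    (ν₁ ν₂ : ℝ → Measure SState)
    (h₁ : IsMildSolution C d lam (fun x => β x) ν₁)
    (h₂ : IsMildSolution C d lam (fun x => β x) ν₂) :
    ∀ t ≥ (0 : ℝ),
      measDist (ν₁ t) (ν₂ t) ≤
        measDist (ν₁ 0) (ν₂ 0) +
          (2 * (C : ℝ) * ‖β‖ + 8 * (d : ℝ) ^ 2 * lam) *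
            ∫ s in (0 : ℝ)..t, measDist (ν₁ s) (ν₂ s) :=
  mild_solutions_gronwall_ineq_general C d lam hlam β ν₁ ν₂ h₁ h₂

end MFModel
end

section
/- Let φ ∈ C_b(𝒰) and, for ν ∈ M_1(𝒰), define ψ_ν : 𝒰 → ℝ by ψ_ν(n,x_1,…,x_n) = (Φ_n(ν)/(n+1)) Σ_{j=1}^{n+1} (φ(n+1,x_1,…,x_{j−1},0,x_j,…,x_n) − φ(n,x_1,…,x_n)) for 0 ≤ n ≤ C−1, and ψ_ν ≡ 0 on 𝒰_C. If t ↦ ν_t ∈ M_1(𝒰) is continuous for the weak topology, then the map t ↦ ⟨ν_t, ψ_{ν_t}⟩ is continuous on [0,∞). -/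
open MeasureTheory Filter Set
open scoped NNReal

namespace MFModel

/-- The arrival part of the drift integrand:
`ψ_ν(n,x₁,…,x_n) = (Φ_n(ν)/(n+1)) Σ_{j=1}^{n+1} (φ(n+1,x₁,…,x_{j−1},0,x_j,…,x_n) − φ(n,x))`
for `0 ≤ n ≤ C−1`, and `ψ_ν ≡ 0` on `𝒰_C` (and beyond). -/
noncomputable def psiArr (C d : ℕ) (φ : SState → ℝ) (ν : Measure SState) (u : SState) : ℝ :=
  if u.1 < C then
    (Phi C d ν u.1 / (u.1 + 1)) *
      ∑ j : Fin (u.1 + 1), (φ ⟨u.1 + 1, j.insertNth 0 u.2⟩ - φ u)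
  else 0

end MFModel

/-!
On `𝒰_n` with `n < C`, `ψ_ν` is `Φ_n(ν)` times `g(u)`, the average over the `n + 1` insertion
slots of the jump of `φ`; `g` does not depend on `ν` and is bounded continuous. Hence
`⟨ν, ψ_ν⟩ = Σ_{n<C} Φ_n(ν) ⟨ν, 1_{𝒰_n} g⟩`. The levels are clopen, so `1_{𝒰_n}` and `1_{𝒰_n} g`
are admissible test functions, and weak continuity makes both the pairings and the masses
`ν_t(𝒰_m)`, hence the polynomials `Φ_n(ν_t)`, continuous in `t`.
-/

open BoundedContinuousFunction

instance Sigma.opensMeasurableSpace {ι : Type*} {X : ι → Type*} [∀ i, TopologicalSpace (X i)]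
    [∀ i, MeasurableSpace (X i)] [∀ i, OpensMeasurableSpace (X i)] :
    OpensMeasurableSpace (Σ i, X i) where
  borel_le := MeasurableSpace.generateFrom_le fun _ hs =>
    MeasurableSpace.measurableSet_iInf.2 fun i => (isOpen_sigma_iff.1 hs i).measurableSet

lemma abs_inv_mul_sum_fin_le {n : ℕ} {a : Fin (n + 1) → ℝ} {M : ℝ} (ha : ∀ j, |a j| ≤ M) :
    |((n : ℝ) + 1)⁻¹ * ∑ j, a j| ≤ M := by
  rw [abs_mul, abs_inv, abs_of_pos (by positivity), inv_mul_le_iff₀ (by positivity)]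
  calc |∑ j, a j| ≤ ∑ j, |a j| := Finset.abs_sum_le_sum_abs _ _
    _ ≤ ∑ _j : Fin (n + 1), M := Finset.sum_le_sum fun j _ => ha j
    _ = (n + 1) * M := by simp

namespace MFModel

lemma IsCb.exists_boundedContinuousFunction {φ : SState → ℝ} (hφ : IsCb φ) :
    ∃ f : SState →ᵇ ℝ, ⇑f = φ :=
  let ⟨hcont, M, hM⟩ := hφ
  ⟨.ofNormedAddCommGroup φ hcont M hM, rfl⟩

lemma level_eq_range (n : ℕ) : level n = range (Sigma.mk n) := by
  ext ⟨m, x⟩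
  constructor
  · rintro rfl
    exact ⟨x, rfl⟩
  · rintro ⟨y, hy⟩
    exact (congrArg Sigma.fst hy).symm

lemma isClopen_level (n : ℕ) : IsClopen (level n) :=
  level_eq_range n ▸ isClopen_range_sigmaMk

lemma measurableSet_level (n : ℕ) : MeasurableSet (level n) :=
  (isClopen_level n).isOpen.measurableSet

noncomputable def levelIndicator (n : ℕ) : SState →ᵇ ℝ := indicator (level n) (isClopen_level n)

noncomputable def arrivalMean (f : SState →ᵇ ℝ) : SState →ᵇ ℝ :=
  .ofNormedAddCommGroup
    (fun u => ((u.1 : ℝ) + 1)⁻¹ * ∑ j : Fin (u.1 + 1), (f ⟨u.1 + 1, j.insertNth 0 u.2⟩ - f u))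
    (continuous_sigma fun n => by
      dsimp only
      refine continuous_const.mul (continuous_finsetSum Finset.univ fun j _ => ?_)
      exact (f.continuous.comp <| continuous_sigmaMk.comp <| continuous_const.finInsertNth j
        continuous_id).sub (f.continuous.comp continuous_sigmaMk))
    (2 * ‖f‖) (fun u => abs_inv_mul_sum_fin_le fun _ => (Real.dist_eq _ _).symm.trans_le
      (f.dist_le_two_norm _ _))

lemma psiArr_eq_sum (C d : ℕ) (f : SState →ᵇ ℝ) (ν : Measure SState) (u : SState) :
    psiArr C d f ν u
      = ∑ n ∈ Finset.range C, Phi C d ν n * (levelIndicator n * arrivalMean f) u := by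
  rcases u with ⟨m, x⟩
  simp [psiArr, levelIndicator, arrivalMean, level, Set.indicator_apply, div_eq_mul_inv, mul_assoc]

lemma integral_psiArr (C d : ℕ) (f : SState →ᵇ ℝ) (μ : Measure SState) [IsFiniteMeasure μ] :
    ∫ u, psiArr C d f μ u ∂μ
      = ∑ n ∈ Finset.range C, Phi C d μ n * ∫ u, (levelIndicator n * arrivalMean f) u ∂μ := by
  simp_rw [psiArr_eq_sum]
  rw [integral_finsetSum _ fun n _ => ((levelIndicator n * arrivalMean f).integrable μ).const_mul _]
  simp_rw [integral_const_mul]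

lemma continuousOn_Phi {X : Type*} [TopologicalSpace X] {ν : X → Measure SState} {s : Set X}
    (C d : ℕ) (hν : ∀ m, ContinuousOn (fun t => (ν t (level m)).toReal) s) (n : ℕ) :
    ContinuousOn (fun t => Phi C d (ν t) n) s := by
  unfold Phi Rbar
  fun_prop

lemma WeaklyContinuous.continuousOn_measure_level {ν : ℝ → Measure SState}
    (hw : WeaklyContinuous ν) (m : ℕ) :
    ContinuousOn (fun t => (ν t (level m)).toReal) (Ici 0) :=
  (hw (levelIndicator m)).congr fun t _ => by
    simp [levelIndicator, integral_indicator_one (measurableSet_level m), measureReal_def]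

theorem arrival_term_continuous_general
    (C d : ℕ)
    (φ : SState → ℝ) (hφ : IsCb φ)
    (ν : ℝ → Measure SState) (hν : ∀ t ≥ (0 : ℝ), MemM1 C (ν t))
    (hw : WeaklyContinuous ν) :
    ContinuousOn (fun t => ∫ u, psiArr C d φ (ν t) u ∂(ν t)) (Set.Ici (0 : ℝ)) := by
  obtain ⟨f, rfl⟩ := hφ.exists_boundedContinuousFunction
  have hPhi := continuousOn_Phi C d hw.continuousOn_measure_level
  have hsum : EqOn (fun t => ∫ u, psiArr C d f (ν t) u ∂(ν t))
      (fun t => ∑ n ∈ Finset.range C,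
        Phi C d (ν t) n * ∫ u, (levelIndicator n * arrivalMean f) u ∂(ν t)) (Ici 0) :=
    fun t ht => have := (hν t ht).1; integral_psiArr C d f (ν t)
  exact (continuousOn_finsetSum _ fun n _ => (hPhi n).mul (hw _)).congr hsum

/-- **Continuity of the nonlinear arrival term along a weakly continuous path.**
If `φ ∈ C_b(𝒰)` and `t ↦ ν_t ∈ M_1(𝒰)` is continuous for the weak topology, then
`t ↦ ⟨ν_t, ψ_{ν_t}⟩` is continuous on `[0,∞)`. -/
theorem arrival_term_continuous
    (C d : ℕ) (hC : 1 ≤ C) (hd : 1 ≤ d)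
    (φ : SState → ℝ) (hφ : IsCb φ)
    (ν : ℝ → Measure SState) (hν : ∀ t ≥ (0 : ℝ), MemM1 C (ν t))
    (hw : WeaklyContinuous ν) :
    ContinuousOn (fun t => ∫ u, psiArr C d φ (ν t) u ∂(ν t)) (Set.Ici (0 : ℝ)) :=
  arrival_term_continuous_general C d φ hφ ν hν hw

end MFModel
end
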